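/- arXiv:2602.06745 — 7 statements merged into one kernel-verified Lean document; each statement's English description precedes it below -/
import Mathlib

section
/- If g ≥ 2 and λ_1, ..., λ_g are distinct real numbers with positive integer multiplicities m_1, ..., m_g satisfying Cartan's formula with c = 0 (i.e., for each i, Σ_{j≠i} m_j (λ_i λ_j)/(λ_i - λ_j) = 0), then g ≤ 2. -/
/-!
Writing `μ = λ⁻¹`, a term of Cartan's sum with `λ_i, λ_j ≠ 0` equals `m_j / (μ_j - μ_i)`, while
terms with `λ_j = 0` vanish. Since at most one `λ_j` is zero, for `g ≥ 3` there are at least two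
nonzero curvatures; choosing `i` among them with `μ_i` maximal makes every term of the `i`-th sum
nonpositive and at least one negative, so the sum cannot vanish.
-/

open Finset

lemma mul_div_sub_eq_inv_sub_inv {a b : ℝ} (ha : a ≠ 0) (hb : b ≠ 0) :
    a * b / (a - b) = (b⁻¹ - a⁻¹)⁻¹ := by
  rw [inv_sub_inv hb ha, inv_div, mul_comm]

lemma mul_mul_div_sub_neg_of_inv_lt {w a b : ℝ} (hw : 0 < w) (ha : a ≠ 0) (hb : b ≠ 0)
    (hab : b⁻¹ < a⁻¹) : w * (a * b) / (a - b) < 0 := by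
  rw [mul_div_assoc, mul_div_sub_eq_inv_sub_inv ha hb]
  exact mul_neg_of_pos_of_neg hw (inv_lt_zero.mpr (sub_neg.mpr hab))

lemma one_lt_card_filter_ne_zero {ι : Type*} [Fintype ι] {lam : ι → ℝ}
    (hlam : Function.Injective lam) (hcard : 2 < Fintype.card ι) :
    1 < #(univ.filter fun i => lam i ≠ 0) := by
  classical
  have hzero : #(univ.filter fun i => ¬lam i ≠ 0) ≤ 1 :=
    card_le_one.mpr fun a ha b hb => hlam <| by
      simp only [mem_filter, mem_univ, true_and, not_not] at ha hb
      rw [ha, hb]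
  have := card_filter_add_card_filter_not (s := univ) fun i => lam i ≠ 0
  rw [card_univ] at this
  omega

theorem card_le_two_of_cartan_euclidean {ι : Type*} [Fintype ι] [DecidableEq ι]
    {lam m : ι → ℝ} (hlam : Function.Injective lam) (hm : ∀ i, 0 < m i)
    (hcartan : ∀ i, ∑ j ∈ univ.erase i, m j * (lam i * lam j) / (lam i - lam j) = 0) :
    Fintype.card ι ≤ 2 := by
  by_contra! hcard
  set Z := univ.filter fun i => lam i ≠ 0
  have hZ : 1 < #Z := one_lt_card_filter_ne_zero hlam hcard
  obtain ⟨i, hiZ, hmax⟩ := Z.exists_max_image (fun i => (lam i)⁻¹) (card_pos.mp (by omega))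
  obtain ⟨j, hjZ⟩ : (Z.erase i).Nonempty := card_pos.mp (by rw [card_erase_of_mem hiZ]; omega)
  have hi : lam i ≠ 0 := (mem_filter.mp hiZ).2
  have hterm_neg : ∀ k ∈ Z.erase i, m k * (lam i * lam k) / (lam i - lam k) < 0 := by
    intro k hk
    obtain ⟨hki, hkZ⟩ := mem_erase.mp hk
    have hk0 : lam k ≠ 0 := (mem_filter.mp hkZ).2
    refine mul_mul_div_sub_neg_of_inv_lt (hm k) hi hk0 (lt_of_le_of_ne (hmax k hkZ) ?_)
    exact fun h => hki (hlam (inv_injective h))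
  have hterm_nonpos : ∀ k ∈ univ.erase i, m k * (lam i * lam k) / (lam i - lam k) ≤ 0 := by
    intro k hk
    by_cases hk0 : lam k = 0
    · simp [hk0]
    · exact (hterm_neg k (mem_erase.mpr ⟨ne_of_mem_erase hk, by simp [Z, hk0]⟩)).le
  have hsum_neg : ∑ k ∈ univ.erase i, m k * (lam i * lam k) / (lam i - lam k) < 0 := by
    refine (sum_lt_sum hterm_nonpos ⟨j, ?_, hterm_neg j hjZ⟩).trans_eq sum_const_zero
    exact mem_erase.mpr ⟨ne_of_mem_erase hjZ, mem_univ j⟩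
  exact hsum_neg.ne (hcartan i)

theorem cartan_formula_euclidean_g_le_two_general (g : ℕ)
    (lam : Fin g → ℝ) (m : Fin g → ℕ)
    (hlam : Function.Injective lam) (hm : ∀ i, 0 < m i)
    (hcartan : ∀ i : Fin g,
      ∑ j ∈ univ.erase i, (m j : ℝ) * (lam i * lam j) / (lam i - lam j) = 0) :
    g ≤ 2 := by
  simpa using card_le_two_of_cartan_euclidean hlam (fun i => Nat.cast_pos.mpr (hm i)) hcartan

/-- Cartan's formula with `c = 0` (Euclidean case) forces at most two
distinct principal curvatures. -/
theorem cartan_formula_euclidean_g_le_two (g : ℕ) (hg : 2 ≤ g)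
    (lam : Fin g → ℝ) (m : Fin g → ℕ)
    (hlam : Function.Injective lam) (hm : ∀ i, 0 < m i)
    (hcartan : ∀ i : Fin g,
      ∑ j ∈ univ.erase i, (m j : ℝ) * (lam i * lam j) / (lam i - lam j) = 0) :
    g ≤ 2 :=
  cartan_formula_euclidean_g_le_two_general g lam m hlam hm hcartan
end

section
/- If g ≥ 2 and λ_1, ..., λ_g are distinct real numbers with positive integer multiplicities m_1, ..., m_g satisfying for each i: Σ_{j≠i} m_j (-1 + λ_i λ_j)/(λ_i - λ_j) = 0, then g ≤ 2. -/
/-!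
The Möbius transformation `ν = (λ + 1) / (λ - 1)` turns each term
`(-1 + λᵢ λⱼ) / (λᵢ - λⱼ)` of Cartan's formula into `(νᵢ + νⱼ) / (νⱼ - νᵢ)`; no `λᵢ` equals `1`,
since otherwise every term of the `i`-th equation would be `-mⱼ`. At the largest `νᵢ` all
denominators are negative, so the `i`-th equation forces `νᵢ + νⱼ < 0` for some `j` unless
`νⱼ = -νᵢ` for all `j ≠ i`, which injectivity rules out when there are three indices or more.
Hence `ν_max + ν_min < 0`, and the same argument for `-ν`, which satisfies the same equations,
gives `ν_max + ν_min > 0`.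
-/

open Finset

-- At `x = 1` the division by zero gives the junk value `0`.
noncomputable def cayley (x : ℝ) : ℝ := (x + 1) / (x - 1)

lemma cayley_cayley {x : ℝ} (hx : x ≠ 1) : cayley (cayley x) = x := by
  have : x - 1 ≠ 0 := sub_ne_zero.2 hx
  unfold cayley
  field_simp
  ring

lemma cayley_comp_injective {ι : Type*} {lam : ι → ℝ} (hlam : Function.Injective lam)
    (hlam1 : ∀ i, lam i ≠ 1) : Function.Injective (cayley ∘ lam) := fun a b h =>
  hlam <| by rw [← cayley_cayley (hlam1 a), ← cayley_cayley (hlam1 b)]; exact congrArg cayley h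

lemma neg_one_add_mul_div_sub_eq_cayley {x y : ℝ} (hx : x ≠ 1) (hy : y ≠ 1) (hxy : x ≠ y) :
    (-1 + x * y) / (x - y) = (cayley x + cayley y) / (cayley y - cayley x) := by
  have hx' : x - 1 ≠ 0 := sub_ne_zero.2 hx
  have hy' : y - 1 ≠ 0 := sub_ne_zero.2 hy
  have hxy' : x - y ≠ 0 := sub_ne_zero.2 hxy
  have hden : cayley y - cayley x = 2 * (x - y) / ((x - 1) * (y - 1)) := by
    unfold cayley; field_simp; ring
  rw [hden, div_div_eq_mul_div, div_eq_div_iff hxy' (by positivity)]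
  unfold cayley
  field_simp
  ring

section

variable {ι : Type*} [Fintype ι] [DecidableEq ι] {m : ι → ℝ}

lemma ne_one_of_sum_neg_one_add_mul_div_sub_eq_zero {lam : ι → ℝ}
    (hlam : Function.Injective lam) (hm : ∀ j, 0 < m j) {i : ι} (hi : (univ.erase i).Nonempty)
    (h : ∑ j ∈ univ.erase i, m j * (-1 + lam i * lam j) / (lam i - lam j) = 0) :
    lam i ≠ 1 := by
  intro h1
  have hterm : ∀ j ∈ univ.erase i, m j * (-1 + lam i * lam j) / (lam i - lam j) = -m j := by
    intro j hj
    have hd : lam i - lam j ≠ 0 := sub_ne_zero.2 (hlam.ne (ne_of_mem_erase hj).symm)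
    rw [h1] at hd ⊢
    rw [div_eq_iff hd]
    ring
  rw [sum_congr rfl hterm, sum_neg_distrib, neg_eq_zero] at h
  exact (sum_pos (fun j _ => hm j) hi).ne' h

lemma exists_add_neg_of_sum_add_div_sub_eq_zero {ν : ι → ℝ} (hν : Function.Injective ν)
    (hm : ∀ j, 0 < m j) (hcard : 2 < Fintype.card ι) {i : ι} (hi : ∀ j, ν j ≤ ν i)
    (h : ∑ j ∈ univ.erase i, m j * (ν i + ν j) / (ν j - ν i) = 0) : ∃ j, ν i + ν j < 0 := by
  by_contra! hnonneg
  have hterm : ∀ j ∈ univ.erase i, m j * (ν i + ν j) / (ν j - ν i) ≤ 0 := fun j _ =>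
    div_nonpos_of_nonneg_of_nonpos (mul_nonneg (hm j).le (hnonneg j)) (sub_nonpos.2 (hi j))
  have hantipodal : ∀ j ∈ univ.erase i, ν j = -ν i := by
    intro j hj
    have hd : ν j - ν i ≠ 0 := sub_ne_zero.2 (hν.ne (ne_of_mem_erase hj))
    have := (sum_eq_zero_iff_of_nonpos hterm).1 h j hj
    rw [div_eq_zero_iff, mul_eq_zero] at this
    rcases this with (hmj | hsum) | hd0
    · exact absurd hmj (hm j).ne'
    · linarith
    · exact absurd hd0 hd
  have : #(univ.erase i) ≤ 1 :=
    card_le_one.2 fun a ha b hb => hν ((hantipodal a ha).trans (hantipodal b hb).symm)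
  rw [card_erase_of_mem (mem_univ i), card_univ] at this
  omega

theorem card_le_two_of_sum_add_div_sub_eq_zero {ν : ι → ℝ} (hν : Function.Injective ν)
    (hm : ∀ j, 0 < m j) (h : ∀ i, ∑ j ∈ univ.erase i, m j * (ν i + ν j) / (ν j - ν i) = 0) :
    Fintype.card ι ≤ 2 := by
  by_contra! hcard
  have : Nonempty ι := Fintype.card_pos_iff.1 (by omega)
  obtain ⟨i, hi⟩ := Finite.exists_max ν
  obtain ⟨k, hk⟩ := Finite.exists_min ν
  have hneg : ∀ i, ∑ j ∈ univ.erase i, m j * ((-ν) i + (-ν) j) / ((-ν) j - (-ν) i) = 0 := by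
    intro i
    rw [← h i]
    refine sum_congr rfl fun j _ => ?_
    rw [Pi.neg_apply, Pi.neg_apply, ← neg_add, neg_sub_neg, ← neg_sub, mul_neg, neg_div_neg_eq]
  obtain ⟨j, hj⟩ := exists_add_neg_of_sum_add_div_sub_eq_zero hν hm hcard hi (h i)
  obtain ⟨j', hj'⟩ : ∃ j, -ν k + -ν j < 0 := exists_add_neg_of_sum_add_div_sub_eq_zero
    (neg_injective.comp hν) hm hcard (fun j => neg_le_neg (hk j)) (hneg k)
  linarith [hk j, hi j']

end

theorem cartan_formula_hyperbolic_g_le_two_general (g : ℕ)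
    (lam : Fin g → ℝ) (m : Fin g → ℕ)
    (hlam : Function.Injective lam) (hm : ∀ i, 0 < m i)
    (hcartan : ∀ i : Fin g,
      ∑ j ∈ univ.erase i, (m j : ℝ) * (-1 + lam i * lam j) / (lam i - lam j) = 0) :
    g ≤ 2 := by
  by_contra! hg
  have hm' : ∀ j, (0 : ℝ) < m j := fun j => Nat.cast_pos.2 (hm j)
  have herase : ∀ i : Fin g, (univ.erase i).Nonempty := fun i =>
    card_pos.1 (by rw [card_erase_of_mem (mem_univ i), card_univ, Fintype.card_fin]; omega)
  have hlam1 : ∀ i, lam i ≠ 1 := fun i =>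
    ne_one_of_sum_neg_one_add_mul_div_sub_eq_zero hlam hm' (herase i) (hcartan i)
  have hcayley : ∀ i, ∑ j ∈ univ.erase i,
      (m j : ℝ) * (cayley (lam i) + cayley (lam j)) / (cayley (lam j) - cayley (lam i)) = 0 := by
    intro i
    rw [← hcartan i]
    refine sum_congr rfl fun j hj => ?_
    rw [mul_div_assoc, mul_div_assoc, neg_one_add_mul_div_sub_eq_cayley (hlam1 i) (hlam1 j)
      (hlam.ne (ne_of_mem_erase hj).symm)]
  have := card_le_two_of_sum_add_div_sub_eq_zero (cayley_comp_injective hlam hlam1) hm' hcayley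
  rw [Fintype.card_fin] at this
  omega

/-- Cartan's formula with `c = -1` (hyperbolic case) forces at most two
distinct principal curvatures. -/
theorem cartan_formula_hyperbolic_g_le_two (g : ℕ) (hg : 2 ≤ g)
    (lam : Fin g → ℝ) (m : Fin g → ℕ)
    (hlam : Function.Injective lam) (hm : ∀ i, 0 < m i)
    (hcartan : ∀ i : Fin g,
      ∑ j ∈ univ.erase i, (m j : ℝ) * (-1 + lam i * lam j) / (lam i - lam j) = 0) :
    g ≤ 2 :=
  cartan_formula_hyperbolic_g_le_two_general g lam m hlam hm hcartan
end

section
/- For a fixed integer g ≥ 1, the real numbers λ_i = cot(θ_1 + (i-1)π/g) for i = 1, ..., g (where 0 < θ_1 < π/g) satisfy Cartan's identity with c = 1 and equal multiplicities: for each i, Σ_{j≠i} (1 + λ_i λ_j)/(λ_i - λ_j) = 0. -/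
open Finset Real

private lemma cot_per : Function.Periodic Real.cot π := by
  intro x
  rw [Real.cot_eq_cos_div_sin, Real.cot_eq_cos_div_sin, Real.cos_add_pi, Real.sin_add_pi,
    neg_div_neg_eq]

private lemma cot_neg' (x : ℝ) : Real.cot (-x) = -Real.cot x := by
  rw [Real.cot_eq_cos_div_sin, Real.cot_eq_cos_div_sin, Real.cos_neg, Real.sin_neg, div_neg]

private lemma cot_shift (g : ℕ) (hg : 0 < g) (a b : ℤ) (h : (g:ℤ) ∣ (a - b)) :
    Real.cot ((a:ℝ) * π / g) = Real.cot ((b:ℝ) * π / g) := by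
  obtain ⟨m, hm⟩ := h
  have hg' : (g:ℝ) ≠ 0 := Nat.cast_ne_zero.mpr hg.ne'
  have ha : (a:ℝ) * π / g = (b:ℝ) * π / g + m * π := by
    have : (a:ℝ) = b + g * m := by exact_mod_cast (by linarith : a = b + g * m)
    rw [this]; field_simp
  rw [ha, cot_per.int_mul m]

private lemma cot_pair (a b : ℝ) (ha : Real.sin a ≠ 0) (hb : Real.sin b ≠ 0)
    (hab : Real.sin (b - a) ≠ 0) :
    (1 + Real.cot a * Real.cot b) / (Real.cot a - Real.cot b) = Real.cot (b - a) := by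
  have h1 : Real.cot a - Real.cot b = Real.sin (b - a) / (Real.sin a * Real.sin b) := by
    rw [Real.cot_eq_cos_div_sin, Real.cot_eq_cos_div_sin, Real.sin_sub]
    field_simp
  have h2 : 1 + Real.cot a * Real.cot b = Real.cos (b - a) / (Real.sin a * Real.sin b) := by
    rw [Real.cot_eq_cos_div_sin, Real.cot_eq_cos_div_sin, Real.cos_sub]
    field_simp; ring
  rw [h1, h2, Real.cot_eq_cos_div_sin, div_div_div_eq]
  rw [mul_comm (Real.sin a * Real.sin b), mul_div_mul_right _ _ (mul_ne_zero ha hb)]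

/-- The evenly spaced cotangent values `cot (θ₁ + (i-1)π/g)` satisfy Cartan's
identity with `c = 1` and equal multiplicities. -/
theorem cartan_identity_cot (g : ℕ) (hg : 1 ≤ g) (θ₁ : ℝ)
    (hθ₁ : 0 < θ₁) (hθ₁' : θ₁ < π / g)
    (lam : Fin g → ℝ)
    (hlam : ∀ i : Fin g, lam i = Real.cot (θ₁ + (i : ℝ) * π / g)) :
    ∀ i : Fin g,
      ∑ j ∈ univ.erase i, (1 + lam i * lam j) / (lam i - lam j) = 0 := by
  haveI : NeZero g := ⟨by omega⟩
  intro i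
  have hgR : (0:ℝ) < g := by exact_mod_cast hg
  have hg0 : (g:ℝ) ≠ 0 := hgR.ne'
  have hpi := Real.pi_pos
  set θ : Fin g → ℝ := fun j => θ₁ + (j:ℝ) * π / g with hθ
  have hjle : ∀ j : Fin g, (j:ℝ) ≤ (g:ℝ) - 1 := by
    intro j
    have := j.isLt
    have : (j:ℕ) ≤ g - 1 := by omega
    have h2 : ((j:ℕ):ℝ) ≤ ((g-1:ℕ):ℝ) := Nat.cast_le.mpr this
    have h3 : ((g-1:ℕ):ℝ) = (g:ℝ) - 1 := by
      push_cast [Nat.cast_sub hg]; ring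
    linarith [h2, h3.le]
  have hsin : ∀ j : Fin g, Real.sin (θ j) ≠ 0 := by
    intro j
    apply ne_of_gt
    apply Real.sin_pos_of_pos_of_lt_pi
    · have : 0 ≤ (j:ℝ) * π / g := by positivity
      simp only [hθ]; linarith
    · have h1 : (j:ℝ) * π / g ≤ ((g:ℝ) - 1) * π / g := by
        gcongr
        exact hjle j
      have h2 : π / g + ((g:ℝ) - 1) * π / g = π := by field_simp; ring
      simp only [hθ]; linarith
  have hsub : ∀ j : Fin g, j ≠ i → Real.sin (θ j - θ i) ≠ 0 := by
    intro j hj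
    have hji : θ j - θ i = ((j:ℝ) - (i:ℝ)) * π / g := by simp only [hθ]; ring
    rw [hji]
    have hb1 : ((j:ℝ) - (i:ℝ)) * π / g < π := by
      rw [div_lt_iff₀ hgR]
      have : (j:ℝ) - (i:ℝ) < g := by
        have := hjle j
        have : (0:ℝ) ≤ (i:ℝ) := Nat.cast_nonneg _
        linarith [hjle j]
      nlinarith
    have hb2 : -π < ((j:ℝ) - (i:ℝ)) * π / g := by
      rw [lt_div_iff₀ hgR]
      have : -(g:ℝ) < (j:ℝ) - (i:ℝ) := by
        have := hjle i
        have : (0:ℝ) ≤ (j:ℝ) := Nat.cast_nonneg _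
        linarith [hjle i]
      nlinarith
    intro h0
    rw [Real.sin_eq_zero_iff_of_lt_of_lt hb2 hb1] at h0
    have hπg : π / (g:ℝ) ≠ 0 := by positivity
    rw [mul_div_assoc, mul_eq_zero] at h0
    rcases h0 with h0 | h0
    · have : (j:ℝ) = (i:ℝ) := by linarith
      exact hj (Fin.ext (by exact_mod_cast this))
    · exact hπg h0
  have hterm : ∀ j ∈ univ.erase i,
      (1 + lam i * lam j) / (lam i - lam j) = Real.cot (θ j - θ i) := by
    intro j hj
    have hj' : j ≠ i := (mem_erase.mp hj).1
    rw [hlam i, hlam j]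
    exact cot_pair _ _ (hsin i) (hsin j) (hsub j hj')
  rw [Finset.sum_congr rfl hterm]
  have key : ∑ j ∈ univ.erase i, Real.cot (θ j - θ i)
      = ∑ k ∈ univ.erase (0 : Fin g), Real.cot (((k:ℕ):ℝ) * π / g) := by
    refine Finset.sum_nbij' (fun j => j - i) (fun k => k + i) ?_ ?_ ?_ ?_ ?_
    · intro a ha
      simp only [mem_erase, mem_univ, and_true] at *
      intro h
      exact ha (by rwa [sub_eq_zero] at h)
    · intro a ha
      simp only [mem_erase, mem_univ, and_true] at *
      intro h
      exact ha (by rwa [add_eq_right] at h)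
    · intro a _; exact sub_add_cancel a i
    · intro a _; exact add_sub_cancel_right a i
    · intro a _
      have h1 : θ a - θ i = (((a:ℕ):ℤ) : ℝ) * π / g - (((i:ℕ):ℤ):ℝ) * π / g := by
        simp only [hθ]; push_cast; ring
      have h1' : θ a - θ i = ((((a:ℕ):ℤ) - ((i:ℕ):ℤ) : ℤ) : ℝ) * π / g := by
        rw [h1]; push_cast; ring
      have h2 : (((a - i : Fin g):ℕ):ℝ) * π / g = (((((a - i : Fin g):ℕ):ℤ)):ℝ) * π / g := by
        push_cast; rfl
      rw [h1', h2]
      apply cot_shift g (by omega)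
      have hig : (i:ℕ) ≤ g := (i.isLt).le
      have hv : ((a - i : Fin g):ℕ) = (g - (i:ℕ) + (a:ℕ)) % g := by
        rw [Fin.sub_def]
      rw [← ZMod.intCast_zmod_eq_zero_iff_dvd]
      push_cast
      rw [hv, ZMod.natCast_mod]
      push_cast [Nat.cast_sub hig]
      simp [ZMod.natCast_self]
      ring
  rw [key]
  refine Finset.sum_involution (fun k _ => -k) ?_ ?_ ?_ ?_
  · intro a ha
    show Real.cot (((a:ℕ):ℝ) * π / g) + Real.cot ((((-a : Fin g):ℕ):ℝ) * π / g) = 0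
    have ha' : a ≠ 0 := (mem_erase.mp ha).1
    have hv : ((-a : Fin g):ℕ) = g - (a:ℕ) := by
      rw [Fin.coe_neg]
      apply Nat.mod_eq_of_lt
      have : 0 < (a:ℕ) := Nat.pos_of_ne_zero (fun h => ha' (Fin.ext h))
      omega
    have hc : (((-a : Fin g):ℕ):ℝ) = (g:ℝ) - ((a:ℕ):ℝ) := by
      rw [hv]; push_cast [Nat.cast_sub (a.isLt).le]; ring
    have harg : (((-a : Fin g):ℕ):ℝ) * π / g = -(((a:ℕ):ℝ) * π / g) + π := by
      rw [hc]; field_simp; ring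
    rw [harg, cot_per, cot_neg']
    ring
  · intro a ha hf h
    have h' : -a = a := h
    have ha' : a ≠ 0 := (mem_erase.mp ha).1
    have hv : ((-a : Fin g):ℕ) = g - (a:ℕ) := by
      rw [Fin.coe_neg]
      apply Nat.mod_eq_of_lt
      have : 0 < (a:ℕ) := Nat.pos_of_ne_zero (fun hh => ha' (Fin.ext hh))
      omega
    have hc : (((-a : Fin g):ℕ):ℝ) = (g:ℝ) - ((a:ℕ):ℝ) := by
      rw [hv]; push_cast [Nat.cast_sub (a.isLt).le]; ring
    have harg : (((-a : Fin g):ℕ):ℝ) * π / g = -(((a:ℕ):ℝ) * π / g) + π := by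
      rw [hc]; field_simp; ring
    have hthis : Real.cot ((((-a:Fin g):ℕ):ℝ) * π / g) = -Real.cot (((a:ℕ):ℝ) * π / g) := by
      rw [harg, cot_per, cot_neg']
    rw [h'] at hthis
    apply hf
    linarith
  · intro a ha
    have ha' : a ≠ 0 := (mem_erase.mp ha).1
    show -a ∈ univ.erase (0 : Fin g)
    simp only [mem_erase, mem_univ, and_true]
    exact fun h => ha' (neg_eq_zero.mp h)
  · intro a _; show - -a = a; exact neg_neg a
end

section
/- Let F(x,y) = (|x|² − |y|²)² + 4⟨x,y⟩² on ℝ^{m+1} × ℝ^{m+1}. Then |grad F|² = 16 r² F and ΔF = 16 r², where r² = |x|² + |y|². -/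
open scoped RealInnerProductSpace
open Finset

/-- Euclidean Laplacian on `EuclideanSpace ℝ ι`. -/
noncomputable def eLap {ι : Type*} [Fintype ι] [DecidableEq ι]
    (f : EuclideanSpace ℝ ι → ℝ) (x : EuclideanSpace ℝ ι) : ℝ :=
  ∑ i, fderiv ℝ (fun y => fderiv ℝ f y (EuclideanSpace.single i 1)) x
    (EuclideanSpace.single i 1)

set_option linter.unusedSectionVars false

section Aux
variable {ι : Type*} [Fintype ι] [DecidableEq ι]

lemma hasFDerivAt_coord (i : ι) (z : EuclideanSpace ℝ ι) :
    HasFDerivAt (fun y : EuclideanSpace ℝ ι => y i) (EuclideanSpace.proj (𝕜 := ℝ) i) z :=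
  (EuclideanSpace.proj (𝕜 := ℝ) i).hasFDerivAt

lemma hasFDerivAt_coord_mul (i j : ι) (z : EuclideanSpace ℝ ι) :
    HasFDerivAt (fun y : EuclideanSpace ℝ ι => y i * y j)
      (z i • EuclideanSpace.proj (𝕜 := ℝ) j + z j • EuclideanSpace.proj (𝕜 := ℝ) i) z :=
  (hasFDerivAt_coord i z).mul (hasFDerivAt_coord j z)

lemma norm_sq_eq' (x : EuclideanSpace ℝ ι) : ‖x‖ ^ 2 = ∑ i, x i ^ 2 := by
  rw [EuclideanSpace.norm_eq, Real.sq_sqrt (Finset.sum_nonneg fun i _ => sq_nonneg _)]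
  simp [Real.norm_eq_abs, sq_abs]

end Aux

section Main
variable {m : ℕ}

noncomputable def pj (i : Fin (m + 1) ⊕ Fin (m + 1)) :
    EuclideanSpace ℝ (Fin (m + 1) ⊕ Fin (m + 1)) →L[ℝ] ℝ := EuclideanSpace.proj i

noncomputable def dA (z : EuclideanSpace ℝ (Fin (m + 1) ⊕ Fin (m + 1))) :
    EuclideanSpace ℝ (Fin (m + 1) ⊕ Fin (m + 1)) →L[ℝ] ℝ :=
  ∑ k, (z (Sum.inl k) • pj (Sum.inl k) + z (Sum.inl k) • pj (Sum.inl k))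

noncomputable def dB (z : EuclideanSpace ℝ (Fin (m + 1) ⊕ Fin (m + 1))) :
    EuclideanSpace ℝ (Fin (m + 1) ⊕ Fin (m + 1)) →L[ℝ] ℝ :=
  ∑ k, (z (Sum.inr k) • pj (Sum.inr k) + z (Sum.inr k) • pj (Sum.inr k))

noncomputable def dC (z : EuclideanSpace ℝ (Fin (m + 1) ⊕ Fin (m + 1))) :
    EuclideanSpace ℝ (Fin (m + 1) ⊕ Fin (m + 1)) →L[ℝ] ℝ :=
  ∑ k, (z (Sum.inl k) • pj (Sum.inr k) + z (Sum.inr k) • pj (Sum.inl k))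

-- abbreviations for the three scalar functions
noncomputable def Af (z : EuclideanSpace ℝ (Fin (m + 1) ⊕ Fin (m + 1))) : ℝ :=
  ∑ k, z (Sum.inl k) ^ 2
noncomputable def Bf (z : EuclideanSpace ℝ (Fin (m + 1) ⊕ Fin (m + 1))) : ℝ :=
  ∑ k, z (Sum.inr k) ^ 2
noncomputable def Cf (z : EuclideanSpace ℝ (Fin (m + 1) ⊕ Fin (m + 1))) : ℝ :=
  ∑ k, z (Sum.inl k) * z (Sum.inr k)

lemma hasFDerivAt_Af (z : EuclideanSpace ℝ (Fin (m + 1) ⊕ Fin (m + 1))) :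
    HasFDerivAt Af (dA z) z := by
  have h : Af (m := m) = fun y => ∑ k, y (Sum.inl k) * y (Sum.inl k) := by
    funext y; simp [Af, sq]
  rw [h]
  exact HasFDerivAt.fun_sum fun k _ => hasFDerivAt_coord_mul (Sum.inl k) (Sum.inl k) z

lemma hasFDerivAt_Bf (z : EuclideanSpace ℝ (Fin (m + 1) ⊕ Fin (m + 1))) :
    HasFDerivAt Bf (dB z) z := by
  have h : Bf (m := m) = fun y => ∑ k, y (Sum.inr k) * y (Sum.inr k) := by
    funext y; simp [Bf, sq]
  rw [h]
  exact HasFDerivAt.fun_sum fun k _ => hasFDerivAt_coord_mul (Sum.inr k) (Sum.inr k) z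

lemma hasFDerivAt_Cf (z : EuclideanSpace ℝ (Fin (m + 1) ⊕ Fin (m + 1))) :
    HasFDerivAt Cf (dC z) z :=
  HasFDerivAt.fun_sum fun k _ => hasFDerivAt_coord_mul (Sum.inl k) (Sum.inr k) z

noncomputable def DF (z : EuclideanSpace ℝ (Fin (m + 1) ⊕ Fin (m + 1))) :
    EuclideanSpace ℝ (Fin (m + 1) ⊕ Fin (m + 1)) →L[ℝ] ℝ :=
  ((Af z - Bf z) • (dA z - dB z) + (Af z - Bf z) • (dA z - dB z)) +
    (4 : ℝ) • (Cf z • dC z + Cf z • dC z)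

lemma hasFDerivAt_F
    (F : EuclideanSpace ℝ (Fin (m + 1) ⊕ Fin (m + 1)) → ℝ)
    (hF : ∀ z, F z =
      (∑ k, z (Sum.inl k) ^ 2 - ∑ k, z (Sum.inr k) ^ 2) ^ 2 +
        4 * (∑ k, z (Sum.inl k) * z (Sum.inr k)) ^ 2)
    (z : EuclideanSpace ℝ (Fin (m + 1) ⊕ Fin (m + 1))) :
    HasFDerivAt F (DF z) z := by
  have h : F = fun y => (Af y - Bf y) * (Af y - Bf y) + 4 * (Cf y * Cf y) := by
    funext y; rw [hF y]; simp [Af, Bf, Cf]; ring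
  rw [h]
  exact (((hasFDerivAt_Af z).sub (hasFDerivAt_Bf z)).mul
      ((hasFDerivAt_Af z).sub (hasFDerivAt_Bf z))).add
    (((hasFDerivAt_Cf z).mul (hasFDerivAt_Cf z)).const_mul 4)

end Main


section Main2
variable {m : ℕ}

lemma DF_apply (z v : EuclideanSpace ℝ (Fin (m + 1) ⊕ Fin (m + 1))) :
    DF z v = ∑ k, (4 * (Af z - Bf z) * z (Sum.inl k) + 8 * Cf z * z (Sum.inr k)) * v (Sum.inl k)
      + ∑ k, (-4 * (Af z - Bf z) * z (Sum.inr k) + 8 * Cf z * z (Sum.inl k)) * v (Sum.inr k) := by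
  simp only [DF, dA, dB, dC, ContinuousLinearMap.add_apply, ContinuousLinearMap.sub_apply,
    ContinuousLinearMap.smul_apply, ContinuousLinearMap.sum_apply, smul_eq_mul, pj,
    PiLp.proj_apply, mul_sub, Finset.mul_sum, ← Finset.sum_sub_distrib,
    ← Finset.sum_add_distrib]
  exact Finset.sum_congr rfl fun k _ => by ring

/-- the gradient vector -/
noncomputable def gv (z : EuclideanSpace ℝ (Fin (m + 1) ⊕ Fin (m + 1))) :
    EuclideanSpace ℝ (Fin (m + 1) ⊕ Fin (m + 1)) :=
  (WithLp.equiv 2 _).symm (Sum.elim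
    (fun k => 4 * (Af z - Bf z) * z (Sum.inl k) + 8 * Cf z * z (Sum.inr k))
    (fun k => -4 * (Af z - Bf z) * z (Sum.inr k) + 8 * Cf z * z (Sum.inl k)))

lemma gradient_eq_gv
    (F : EuclideanSpace ℝ (Fin (m + 1) ⊕ Fin (m + 1)) → ℝ)
    (hF : ∀ z, F z =
      (∑ k, z (Sum.inl k) ^ 2 - ∑ k, z (Sum.inr k) ^ 2) ^ 2 +
        4 * (∑ k, z (Sum.inl k) * z (Sum.inr k)) ^ 2)
    (z : EuclideanSpace ℝ (Fin (m + 1) ⊕ Fin (m + 1))) :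
    gradient F z = gv z := by
  apply HasGradientAt.gradient
  rw [hasGradientAt_iff_hasFDerivAt]
  have h := hasFDerivAt_F F hF z
  have heq : (InnerProductSpace.toDual ℝ _ (gv z) :
      EuclideanSpace ℝ (Fin (m + 1) ⊕ Fin (m + 1)) →L[ℝ] ℝ) = DF z := by
    ext v
    rw [InnerProductSpace.toDual_apply_apply, DF_apply]
    simp only [PiLp.inner_apply, RCLike.inner_apply, conj_trivial, gv,
      WithLp.equiv_symm_apply, PiLp.toLp_apply, Fintype.sum_sum_type, Sum.elim_inl, Sum.elim_inr]
    exact congrArg₂ (· + ·) (Finset.sum_congr rfl fun k _ => mul_comm _ _)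
      (Finset.sum_congr rfl fun k _ => mul_comm _ _)
  rwa [heq]


lemma fderiv_single_inl
    (F : EuclideanSpace ℝ (Fin (m + 1) ⊕ Fin (m + 1)) → ℝ)
    (hF : ∀ z, F z =
      (∑ k, z (Sum.inl k) ^ 2 - ∑ k, z (Sum.inr k) ^ 2) ^ 2 +
        4 * (∑ k, z (Sum.inl k) * z (Sum.inr k)) ^ 2)
    (y : EuclideanSpace ℝ (Fin (m + 1) ⊕ Fin (m + 1))) (k : Fin (m + 1)) :
    fderiv ℝ F y (EuclideanSpace.single (Sum.inl k) 1) =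
      4 * (Af y - Bf y) * y (Sum.inl k) + 8 * Cf y * y (Sum.inr k) := by
  rw [(hasFDerivAt_F F hF y).fderiv, DF_apply]
  simp [EuclideanSpace.single_apply]

lemma fderiv_single_inr
    (F : EuclideanSpace ℝ (Fin (m + 1) ⊕ Fin (m + 1)) → ℝ)
    (hF : ∀ z, F z =
      (∑ k, z (Sum.inl k) ^ 2 - ∑ k, z (Sum.inr k) ^ 2) ^ 2 +
        4 * (∑ k, z (Sum.inl k) * z (Sum.inr k)) ^ 2)
    (y : EuclideanSpace ℝ (Fin (m + 1) ⊕ Fin (m + 1))) (k : Fin (m + 1)) :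
    fderiv ℝ F y (EuclideanSpace.single (Sum.inr k) 1) =
      -4 * (Af y - Bf y) * y (Sum.inr k) + 8 * Cf y * y (Sum.inl k) := by
  rw [(hasFDerivAt_F F hF y).fderiv, DF_apply]
  simp [EuclideanSpace.single_apply]


lemma dA_single (z : EuclideanSpace ℝ (Fin (m + 1) ⊕ Fin (m + 1)))
    (i : Fin (m + 1) ⊕ Fin (m + 1)) :
    dA z (EuclideanSpace.single i 1) =
      Sum.elim (fun k => 2 * z (Sum.inl k)) (fun _ => 0) i := by
  cases i <;>
  simp [dA, pj, ContinuousLinearMap.sum_apply, ContinuousLinearMap.add_apply,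
    ContinuousLinearMap.smul_apply, PiLp.proj_apply, EuclideanSpace.single_apply,
    mul_ite, mul_one, mul_zero, Finset.sum_ite_eq, Finset.sum_ite_eq', two_mul, Finset.sum_add_distrib]

lemma dB_single (z : EuclideanSpace ℝ (Fin (m + 1) ⊕ Fin (m + 1)))
    (i : Fin (m + 1) ⊕ Fin (m + 1)) :
    dB z (EuclideanSpace.single i 1) =
      Sum.elim (fun _ => 0) (fun k => 2 * z (Sum.inr k)) i := by
  cases i <;>
  simp [dB, pj, ContinuousLinearMap.sum_apply, ContinuousLinearMap.add_apply,
    ContinuousLinearMap.smul_apply, PiLp.proj_apply, EuclideanSpace.single_apply,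
    mul_ite, mul_one, mul_zero, Finset.sum_ite_eq, Finset.sum_ite_eq', two_mul, Finset.sum_add_distrib]

lemma dC_single (z : EuclideanSpace ℝ (Fin (m + 1) ⊕ Fin (m + 1)))
    (i : Fin (m + 1) ⊕ Fin (m + 1)) :
    dC z (EuclideanSpace.single i 1) =
      Sum.elim (fun k => z (Sum.inr k)) (fun k => z (Sum.inl k)) i := by
  cases i <;>
  simp [dC, pj, ContinuousLinearMap.sum_apply, ContinuousLinearMap.add_apply,
    ContinuousLinearMap.smul_apply, PiLp.proj_apply, EuclideanSpace.single_apply,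
    mul_ite, mul_one, mul_zero, Finset.sum_ite_eq, Finset.sum_ite_eq']

lemma lap_term_inl
    (F : EuclideanSpace ℝ (Fin (m + 1) ⊕ Fin (m + 1)) → ℝ)
    (hF : ∀ z, F z =
      (∑ k, z (Sum.inl k) ^ 2 - ∑ k, z (Sum.inr k) ^ 2) ^ 2 +
        4 * (∑ k, z (Sum.inl k) * z (Sum.inr k)) ^ 2)
    (z : EuclideanSpace ℝ (Fin (m + 1) ⊕ Fin (m + 1))) (k : Fin (m + 1)) :
    fderiv ℝ (fun y => fderiv ℝ F y (EuclideanSpace.single (Sum.inl k) 1)) z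
      (EuclideanSpace.single (Sum.inl k) 1) =
      4 * (Af z - Bf z) + 8 * z (Sum.inl k) ^ 2 + 8 * z (Sum.inr k) ^ 2 := by
  have hfun : (fun y => fderiv ℝ F y (EuclideanSpace.single (Sum.inl k) 1)) =
      fun y => 4 * (Af y - Bf y) * y (Sum.inl k) + 8 * Cf y * y (Sum.inr k) :=
    funext fun y => fderiv_single_inl F hF y k
  rw [hfun]
  have hd := ((((hasFDerivAt_Af z).sub (hasFDerivAt_Bf z)).const_mul (4:ℝ)).mul
      (hasFDerivAt_coord (Sum.inl k) z)).add
    (((hasFDerivAt_Cf z).const_mul (8:ℝ)).mul (hasFDerivAt_coord (Sum.inr k) z))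
  rw [HasFDerivAt.fderiv (f := fun y => 4 * (Af y - Bf y) * y (Sum.inl k) + 8 * Cf y * y (Sum.inr k)) hd]
  simp only [ContinuousLinearMap.add_apply, ContinuousLinearMap.smul_apply,
    ContinuousLinearMap.sub_apply, smul_eq_mul, PiLp.proj_apply,
    dA_single, dB_single, dC_single, Sum.elim_inl, Sum.elim_inr,
    EuclideanSpace.single_apply]
  simp only [Sum.inl.injEq, reduceCtorEq, if_true, if_false, ite_self]
  simp
  ring

lemma lap_term_inr
    (F : EuclideanSpace ℝ (Fin (m + 1) ⊕ Fin (m + 1)) → ℝ)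
    (hF : ∀ z, F z =
      (∑ k, z (Sum.inl k) ^ 2 - ∑ k, z (Sum.inr k) ^ 2) ^ 2 +
        4 * (∑ k, z (Sum.inl k) * z (Sum.inr k)) ^ 2)
    (z : EuclideanSpace ℝ (Fin (m + 1) ⊕ Fin (m + 1))) (k : Fin (m + 1)) :
    fderiv ℝ (fun y => fderiv ℝ F y (EuclideanSpace.single (Sum.inr k) 1)) z
      (EuclideanSpace.single (Sum.inr k) 1) =
      -4 * (Af z - Bf z) + 8 * z (Sum.inr k) ^ 2 + 8 * z (Sum.inl k) ^ 2 := by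
  have hfun : (fun y => fderiv ℝ F y (EuclideanSpace.single (Sum.inr k) 1)) =
      fun y => -4 * (Af y - Bf y) * y (Sum.inr k) + 8 * Cf y * y (Sum.inl k) :=
    funext fun y => fderiv_single_inr F hF y k
  rw [hfun]
  have hd := ((((hasFDerivAt_Af z).sub (hasFDerivAt_Bf z)).const_mul (-4:ℝ)).mul
      (hasFDerivAt_coord (Sum.inr k) z)).add
    (((hasFDerivAt_Cf z).const_mul (8:ℝ)).mul (hasFDerivAt_coord (Sum.inl k) z))
  rw [HasFDerivAt.fderiv (f := fun y => -4 * (Af y - Bf y) * y (Sum.inr k) + 8 * Cf y * y (Sum.inl k)) hd]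
  simp only [ContinuousLinearMap.add_apply, ContinuousLinearMap.smul_apply,
    ContinuousLinearMap.sub_apply, smul_eq_mul, PiLp.proj_apply,
    dA_single, dB_single, dC_single, Sum.elim_inl, Sum.elim_inr,
    EuclideanSpace.single_apply]
  simp only [Sum.inl.injEq, reduceCtorEq, if_true, if_false, ite_self]
  simp
  ring

lemma sum_combine (n : ℕ) (a b : ℝ) (x y : Fin n → ℝ) :
    ∑ k, ((4 * a * x k + 8 * b * y k) ^ 2 + (-4 * a * y k + 8 * b * x k) ^ 2) =
      (16 * a ^ 2 + 64 * b ^ 2) * (∑ k, x k ^ 2 + ∑ k, y k ^ 2) := by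
  rw [mul_add, Finset.mul_sum, Finset.mul_sum, ← Finset.sum_add_distrib]
  exact Finset.sum_congr rfl fun k _ => by ring

end Main2

/-- For `F(x,y) = (|x|² − |y|²)² + 4⟨x,y⟩²` on `ℝ^{m+1} × ℝ^{m+1}`,
`|grad F|² = 16 r² F` and `ΔF = 16 r²`. -/
theorem grad_lap_degree_four (m : ℕ)
    (F : EuclideanSpace ℝ (Fin (m + 1) ⊕ Fin (m + 1)) → ℝ)
    (hF : ∀ z, F z =
      (∑ k, z (Sum.inl k) ^ 2 - ∑ k, z (Sum.inr k) ^ 2) ^ 2 +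
        4 * (∑ k, z (Sum.inl k) * z (Sum.inr k)) ^ 2) :
    (∀ z, ‖gradient F z‖ ^ 2 = 16 * ‖z‖ ^ 2 * F z) ∧
    (∀ z, eLap F z = 16 * ‖z‖ ^ 2) := by
  constructor
  · intro z
    rw [gradient_eq_gv F hF z, norm_sq_eq', norm_sq_eq' z, hF z]
    simp only [Fintype.sum_sum_type]
    simp only [gv, WithLp.equiv_symm_apply, PiLp.toLp_apply, Sum.elim_inl, Sum.elim_inr, Af, Bf, Cf]
    rw [← Finset.sum_add_distrib, sum_combine]
    ring
  · intro z
    simp only [eLap, Fintype.sum_sum_type]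
    rw [Finset.sum_congr rfl (fun k _ => lap_term_inl F hF z k),
      Finset.sum_congr rfl (fun k _ => lap_term_inr F hF z k),
      norm_sq_eq' z, Fintype.sum_sum_type]
    simp only [Af, Bf, Cf, Finset.sum_add_distrib, Finset.sum_const, Finset.card_univ,
      Fintype.card_fin, nsmul_eq_mul, ← Finset.mul_sum]
    push_cast
    ring
end

section
/- Let F(x,y) = (|x|² − |y|²)² + 4⟨x,y⟩² on ℝ^{2m+2} and set F̃ = r⁴ − 2F where r² = |x|² + |y|². Then |grad F̃|² = 16 r⁶ and Δ F̃ = 8(m−2) r², i.e., F̃ satisfies the Cartan–Münzner differential equations with g = 4 and c = 8(m−2). -/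
open scoped RealInnerProductSpace
open Finset

section CMaux
variable {m : ℕ}
local notation "E" => EuclideanSpace ℝ (Fin (m + 1) ⊕ Fin (m + 1))

private noncomputable def AA (z : E) : ℝ := ∑ k, z (Sum.inl k) ^ 2
private noncomputable def BB (z : E) : ℝ := ∑ k, z (Sum.inr k) ^ 2
private noncomputable def CC (z : E) : ℝ := ∑ k, z (Sum.inl k) * z (Sum.inr k)

private noncomputable def DA (z : E) : E →L[ℝ] ℝ :=
  ∑ k, (2 * z (Sum.inl k)) • EuclideanSpace.proj (Sum.inl k)
private noncomputable def DB (z : E) : E →L[ℝ] ℝ :=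
  ∑ k, (2 * z (Sum.inr k)) • EuclideanSpace.proj (Sum.inr k)
private noncomputable def DC (z : E) : E →L[ℝ] ℝ :=
  ∑ k, ((z (Sum.inl k)) • EuclideanSpace.proj (Sum.inr k)
      + (z (Sum.inr k)) • EuclideanSpace.proj (Sum.inl k))

private lemma hA (z : E) : HasFDerivAt AA (DA z) z := by
  apply HasFDerivAt.fun_sum
  intro k _
  have h := PiLp.hasFDerivAt_apply (𝕜 := ℝ) 2 z (Sum.inl k)
  simpa [pow_two, two_mul, add_smul] using h.fun_mul h

private lemma hB (z : E) : HasFDerivAt BB (DB z) z := by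
  apply HasFDerivAt.fun_sum
  intro k _
  have h := PiLp.hasFDerivAt_apply (𝕜 := ℝ) 2 z (Sum.inr k)
  simpa [pow_two, two_mul, add_smul] using h.fun_mul h

private lemma hC (z : E) : HasFDerivAt CC (DC z) z := by
  apply HasFDerivAt.fun_sum
  intro k _
  exact (PiLp.hasFDerivAt_apply (𝕜 := ℝ) 2 z (Sum.inl k)).mul
    (PiLp.hasFDerivAt_apply (𝕜 := ℝ) 2 z (Sum.inr k))

private lemma DA_l (z : E) (i : Fin (m+1)) :
    DA z (EuclideanSpace.single (Sum.inl i) 1) = 2 * z (Sum.inl i) := by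
  simp [DA, EuclideanSpace.single_apply]
private lemma DA_r (z : E) (i : Fin (m+1)) :
    DA z (EuclideanSpace.single (Sum.inr i) 1) = 0 := by
  simp [DA, EuclideanSpace.single_apply]
private lemma DB_l (z : E) (i : Fin (m+1)) :
    DB z (EuclideanSpace.single (Sum.inl i) 1) = 0 := by
  simp [DB, EuclideanSpace.single_apply]
private lemma DB_r (z : E) (i : Fin (m+1)) :
    DB z (EuclideanSpace.single (Sum.inr i) 1) = 2 * z (Sum.inr i) := by
  simp [DB, EuclideanSpace.single_apply]
private lemma DC_l (z : E) (i : Fin (m+1)) :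
    DC z (EuclideanSpace.single (Sum.inl i) 1) = z (Sum.inr i) := by
  simp [DC, EuclideanSpace.single_apply]
private lemma DC_r (z : E) (i : Fin (m+1)) :
    DC z (EuclideanSpace.single (Sum.inr i) 1) = z (Sum.inl i) := by
  simp [DC, EuclideanSpace.single_apply]

private lemma normsq (v : E) : ‖v‖ ^ 2 = ∑ j, v j ^ 2 := by
  rw [EuclideanSpace.norm_eq, Real.sq_sqrt (by positivity)]
  simp [sq_abs]

private lemma normsqAB (v : E) : ‖v‖ ^ 2 = AA v + BB v := by
  rw [normsq, Fintype.sum_sum_type]; rfl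

private noncomputable def DFt (z : E) : E →L[ℝ] ℝ :=
  (2*(AA z + BB z)) • (DA z + DB z) - (4*(AA z - BB z)) • (DA z - DB z)
    - (16 * CC z) • DC z

private lemma hG (z : E) :
    HasFDerivAt (fun z : E => (AA z + BB z)^2 - 2*((AA z - BB z)^2 + 4*CC z^2))
      (DFt z) z := by
  have h := (((hA z).fun_add (hB z)).fun_mul ((hA z).fun_add (hB z))).fun_sub
    (((((hA z).fun_sub (hB z)).fun_mul ((hA z).fun_sub (hB z))).fun_add
      (((hC z).fun_mul (hC z)).const_mul 4)).const_mul 2)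
  simp only [pow_two]
  refine h.congr_fderiv ?_
  ext v
  simp [DFt, smul_smul]
  ring

private lemma DFt_l (z : E) (i : Fin (m+1)) :
    DFt z (EuclideanSpace.single (Sum.inl i) 1)
      = (12*BB z - 4*AA z) * z (Sum.inl i) + (-16*CC z) * z (Sum.inr i) := by
  simp [DFt, DA_l, DB_l, DC_l]
  ring

private lemma DFt_r (z : E) (i : Fin (m+1)) :
    DFt z (EuclideanSpace.single (Sum.inr i) 1)
      = (-16*CC z) * z (Sum.inl i) + (12*AA z - 4*BB z) * z (Sum.inr i) := by
  simp [DFt, DA_r, DB_r, DC_r]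
  ring

private lemma lapl (z : E) (i : Fin (m+1)) :
    fderiv ℝ (fun y : E => (12*BB y - 4*AA y) * y (Sum.inl i) + (-16*CC y) * y (Sum.inr i)) z
        (EuclideanSpace.single (Sum.inl i) 1)
      = 12*BB z - 4*AA z - 8*z (Sum.inl i)^2 - 16*z (Sum.inr i)^2 := by
  have h := ((((hB z).const_mul 12).fun_sub ((hA z).const_mul 4)).fun_mul
      (PiLp.hasFDerivAt_apply (𝕜 := ℝ) 2 z (Sum.inl i))).fun_add
    ((((hC z).const_mul (-16))).fun_mul (PiLp.hasFDerivAt_apply (𝕜 := ℝ) 2 z (Sum.inr i)))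
  rw [h.fderiv]
  simp [DA_l, DB_l, DC_l, EuclideanSpace.single_apply]
  ring

private lemma lapr (z : E) (i : Fin (m+1)) :
    fderiv ℝ (fun y : E => (-16*CC y) * y (Sum.inl i) + (12*AA y - 4*BB y) * y (Sum.inr i)) z
        (EuclideanSpace.single (Sum.inr i) 1)
      = 12*AA z - 4*BB z - 8*z (Sum.inr i)^2 - 16*z (Sum.inl i)^2 := by
  have h := ((((hC z).const_mul (-16))).fun_mul
      (PiLp.hasFDerivAt_apply (𝕜 := ℝ) 2 z (Sum.inl i))).fun_add
    ((((hA z).const_mul 12).fun_sub ((hB z).const_mul 4)).fun_mul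
      (PiLp.hasFDerivAt_apply (𝕜 := ℝ) 2 z (Sum.inr i)))
  rw [h.fderiv]
  simp [DA_r, DB_r, DC_r, EuclideanSpace.single_apply]
  ring

private lemma grad_coord (f : E → ℝ) (z : E) (j : Fin (m+1) ⊕ Fin (m+1)) :
    gradient f z j = fderiv ℝ f z (EuclideanSpace.single j 1) := by
  have h := InnerProductSpace.toDual_symm_apply (𝕜 := ℝ)
    (x := (EuclideanSpace.single j (1:ℝ) : EuclideanSpace ℝ (Fin (m+1) ⊕ Fin (m+1))))
    (y := fderiv ℝ f z)
  rw [EuclideanSpace.inner_single_right] at h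
  simpa [gradient] using h

private lemma expand (z : E) (α β : ℝ) :
    ∑ i, (α * z (Sum.inl i) + β * z (Sum.inr i))^2
      = α^2 * AA z + 2*α*β*CC z + β^2 * BB z := by
  have h : ∀ i, (α * z (Sum.inl i) + β * z (Sum.inr i))^2
      = α^2 * z (Sum.inl i)^2 + 2*α*β*(z (Sum.inl i) * z (Sum.inr i))
        + β^2 * z (Sum.inr i)^2 := fun i => by ring
  simp_rw [h, Finset.sum_add_distrib, ← Finset.mul_sum]
  rfl

end CMaux

/-- With `F(x,y) = (|x|² − |y|²)² + 4⟨x,y⟩²` and `F̃ = r⁴ − 2F`, one has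
`|grad F̃|² = 16 r⁶` and `ΔF̃ = 8(m−2) r²`, i.e. `F̃` satisfies the
Cartan–Münzner equations with `g = 4` and `c = 8(m−2)`. -/
theorem cartan_munzner_g_four (m : ℕ)
    (F Ft : EuclideanSpace ℝ (Fin (m + 1) ⊕ Fin (m + 1)) → ℝ)
    (hF : ∀ z, F z =
      (∑ k, z (Sum.inl k) ^ 2 - ∑ k, z (Sum.inr k) ^ 2) ^ 2 +
        4 * (∑ k, z (Sum.inl k) * z (Sum.inr k)) ^ 2)
    (hFt : ∀ z, Ft z = ‖z‖ ^ 4 - 2 * F z) :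
    (∀ z, ‖gradient Ft z‖ ^ 2 = 16 * ‖z‖ ^ 6) ∧
    (∀ z, eLap Ft z = 8 * ((m : ℝ) - 2) * ‖z‖ ^ 2) := by

  have hFtG : Ft = fun z => (AA z + BB z)^2 - 2*((AA z - BB z)^2 + 4*CC z^2) := by
    funext z
    have h4 : ‖z‖^4 = (AA z + BB z)^2 := by
      have h : ‖z‖^4 = (‖z‖^2)^2 := by ring
      rw [h, normsqAB]
    rw [hFt z, hF z, h4]
    simp only [AA, BB, CC]
  have hfd : ∀ z, fderiv ℝ Ft z = DFt z := fun z => by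
    rw [hFtG]; exact (hG z).fderiv
  constructor
  · intro z
    have hg : ∀ j, gradient Ft z j = DFt z (EuclideanSpace.single j 1) := fun j => by
      rw [grad_coord, hfd]
    rw [normsq (gradient Ft z), Fintype.sum_sum_type]
    simp only [hg, DFt_l, DFt_r]
    rw [expand, expand]
    have h6 : ‖z‖^6 = (AA z + BB z)^3 := by
      have h : ‖z‖^6 = (‖z‖^2)^3 := by ring
      rw [h, normsqAB]
    rw [h6]; ring
  · intro z
    have hl : ∀ i : Fin (m+1),
        fderiv ℝ (fun y => fderiv ℝ Ft y (EuclideanSpace.single (Sum.inl i) 1)) z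
          (EuclideanSpace.single (Sum.inl i) 1)
        = 12*BB z - 4*AA z - 8*z (Sum.inl i)^2 - 16*z (Sum.inr i)^2 := by
      intro i
      have he : (fun y => fderiv ℝ Ft y (EuclideanSpace.single (Sum.inl i) 1))
          = fun y => (12*BB y - 4*AA y) * y (Sum.inl i) + (-16*CC y) * y (Sum.inr i) :=
        funext fun y => by rw [hfd, DFt_l]
      rw [he, lapl]
    have hr : ∀ i : Fin (m+1),
        fderiv ℝ (fun y => fderiv ℝ Ft y (EuclideanSpace.single (Sum.inr i) 1)) z
          (EuclideanSpace.single (Sum.inr i) 1)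
        = 12*AA z - 4*BB z - 8*z (Sum.inr i)^2 - 16*z (Sum.inl i)^2 := by
      intro i
      have he : (fun y => fderiv ℝ Ft y (EuclideanSpace.single (Sum.inr i) 1))
          = fun y => (-16*CC y) * y (Sum.inl i) + (12*AA y - 4*BB y) * y (Sum.inr i) :=
        funext fun y => by rw [hfd, DFt_r]
      rw [he, lapr]
    simp only [eLap]
    rw [Fintype.sum_sum_type]
    simp only [hl, hr]
    have sl : ∑ i : Fin (m+1), (12*BB z - 4*AA z - 8*z (Sum.inl i)^2 - 16*z (Sum.inr i)^2)
        = (m+1 : ℝ)*(12*BB z - 4*AA z) - 8*AA z - 16*BB z := by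
      rw [Finset.sum_sub_distrib, Finset.sum_sub_distrib, Finset.sum_const,
        ← Finset.mul_sum, ← Finset.mul_sum]
      simp [AA, BB]
    have sr : ∑ i : Fin (m+1), (12*AA z - 4*BB z - 8*z (Sum.inr i)^2 - 16*z (Sum.inl i)^2)
        = (m+1 : ℝ)*(12*AA z - 4*BB z) - 8*BB z - 16*AA z := by
      rw [Finset.sum_sub_distrib, Finset.sum_sub_distrib, Finset.sum_const,
        ← Finset.mul_sum, ← Finset.mul_sum]
      simp [AA, BB]
    rw [sl, sr, normsqAB]
    ring
end

section
/- Define f_t : S¹ × V_{m+1,2} → S^{2m+1} by f_t(e^{iθ}, (x,y)) = e^{iθ}(cos t · x + sin t · iy), for fixed 0 < t < π/4. Then f_t maps into the unit sphere, V(f_t(e^{iθ},(x,y))) = cos² 2t for all inputs, and f_t is exactly two-to-one: f_t(e^{iθ},(x,y)) = f_t(e^{iφ},(u,v)) iff (e^{iφ},(u,v)) = (e^{iθ},(x,y)) or (e^{i(θ+π)},(−x,−y)). -/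
open Finset Real

lemma reim_eq' {a b a' b' : ℝ} (h : (a:ℂ) + b*Complex.I = (a':ℂ) + (b':ℂ)*Complex.I) :
    a = a' ∧ b = b' := by
  simpa [Complex.ext_iff] using h

lemma cos_two_mul_sub (t : ℝ) : Real.cos (2 * t) = Real.cos t ^ 2 - Real.sin t ^ 2 := by
  rw [Real.cos_two_mul]
  have := Real.sin_sq_add_cos_sq t
  linarith

lemma sum_sq_aux (m : ℕ) (t θ : ℝ) (x y : Fin (m + 1) → ℝ)
    (hx : ∑ k, x k ^ 2 = 1) (hy : ∑ k, y k ^ 2 = 1) (hxy : ∑ k, x k * y k = 0) :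
    ∑ k, (Complex.exp (θ * Complex.I) *
        ((Real.cos t * x k : ℝ) + (Real.sin t * y k : ℝ) * Complex.I)) ^ 2
      = Complex.exp (θ * Complex.I) ^ 2 * (Real.cos (2 * t) : ℂ) := by
  have h1 : (∑ k, (x k : ℂ) ^ 2) = 1 := by exact_mod_cast congrArg Complex.ofReal hx
  have h2 : (∑ k, (y k : ℂ) ^ 2) = 1 := by exact_mod_cast congrArg Complex.ofReal hy
  have h3 : (∑ k, (x k : ℂ) * (y k : ℂ)) = 0 := by
    exact_mod_cast congrArg Complex.ofReal hxy
  have hct : (Real.cos (2 * t) : ℂ) = (Real.cos t : ℂ) ^ 2 - (Real.sin t : ℂ) ^ 2 := by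
    exact_mod_cast congrArg Complex.ofReal (cos_two_mul_sub t)
  set e := Complex.exp (θ * Complex.I) with he
  calc ∑ k, (e * ((Real.cos t * x k : ℝ) + (Real.sin t * y k : ℝ) * Complex.I)) ^ 2
      = ∑ k, (e ^ 2 * (Real.cos t : ℂ) ^ 2 * (x k : ℂ) ^ 2
          - e ^ 2 * (Real.sin t : ℂ) ^ 2 * (y k : ℂ) ^ 2
          + e ^ 2 * (2 * (Real.cos t : ℂ) * (Real.sin t : ℂ)) * Complex.I
              * ((x k : ℂ) * (y k : ℂ))) := by
        refine Finset.sum_congr rfl fun k _ => ?_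
        simp only [Complex.ofReal_mul]
        linear_combination (e ^ 2 * (Real.sin t : ℂ) ^ 2 * (y k : ℂ) ^ 2) * Complex.I_sq
    _ = e ^ 2 * (Real.cos t : ℂ) ^ 2 * (∑ k, (x k : ℂ) ^ 2)
          - e ^ 2 * (Real.sin t : ℂ) ^ 2 * (∑ k, (y k : ℂ) ^ 2)
          + e ^ 2 * (2 * (Real.cos t : ℂ) * (Real.sin t : ℂ)) * Complex.I
              * (∑ k, (x k : ℂ) * (y k : ℂ)) := by
        rw [Finset.sum_add_distrib, Finset.sum_sub_distrib, ← Finset.mul_sum,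
          ← Finset.mul_sum, ← Finset.mul_sum]
    _ = e ^ 2 * (Real.cos (2 * t) : ℂ) := by
        rw [h1, h2, h3, hct]; ring

/-- For fixed `0 < t < π/4` and `m ≥ 2`, the map
`f_t(e^{iθ},(x,y)) = e^{iθ}(cos t · x + sin t · iy)` on `S¹ × V_{m+1,2}` maps
into the unit sphere `S^{2m+1}`, takes the value `V = cos² 2t`, and is exactly
two-to-one. -/
theorem tube_double_cover (m : ℕ) (hm : 2 ≤ m) (t : ℝ)
    (ht : 0 < t) (ht' : t < π / 4)
    (f : ℝ → (Fin (m + 1) → ℝ) → (Fin (m + 1) → ℝ) → (Fin (m + 1) → ℂ))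
    (hf : ∀ θ x y, f θ x y = fun k =>
      Complex.exp (θ * Complex.I) *
        ((Real.cos t * x k : ℝ) + (Real.sin t * y k : ℝ) * Complex.I)) :
    ∀ (θ φ : ℝ) (x y u v : Fin (m + 1) → ℝ),
      (∑ k, x k ^ 2 = 1) → (∑ k, y k ^ 2 = 1) → (∑ k, x k * y k = 0) →
      (∑ k, u k ^ 2 = 1) → (∑ k, v k ^ 2 = 1) → (∑ k, u k * v k = 0) →
      (∑ k, ‖f θ x y k‖ ^ 2 = 1) ∧
      (‖∑ k, f θ x y k ^ 2‖ ^ 2 = Real.cos (2 * t) ^ 2) ∧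
      (f θ x y = f φ u v ↔
        (Complex.exp (φ * Complex.I) = Complex.exp (θ * Complex.I)
            ∧ u = x ∧ v = y) ∨
        (Complex.exp (φ * Complex.I) = Complex.exp ((θ + π) * Complex.I)
            ∧ u = -x ∧ v = -y)) := by
  have hpi0 : (0:ℝ) < π := Real.pi_pos
  have hc : 0 < Real.cos t := Real.cos_pos_of_mem_Ioo ⟨by linarith, by linarith⟩
  have hs : 0 < Real.sin t := Real.sin_pos_of_pos_of_lt_pi ht (by linarith)
  have hc2 : 0 < Real.cos (2 * t) :=
    Real.cos_pos_of_mem_Ioo ⟨by linarith, by linarith⟩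
  intro θ φ x y u v hx hy hxy hu hv huv
  have hpi : Complex.exp (((θ:ℂ) + (π:ℂ)) * Complex.I) = -Complex.exp ((θ:ℂ) * Complex.I) := by
    rw [add_mul, Complex.exp_add, Complex.exp_pi_mul_I]
    ring
  have hE : Complex.exp ((θ:ℂ) * Complex.I) ≠ 0 := Complex.exp_ne_zero _
  refine ⟨?_, ?_, ?_⟩
  · -- sphere
    have hterm : ∀ k, ‖f θ x y k‖ ^ 2
        = (Real.cos t) ^ 2 * x k ^ 2 + (Real.sin t) ^ 2 * y k ^ 2 := by
      intro k
      rw [hf]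
      simp only [norm_mul, Complex.norm_exp_ofReal_mul_I, one_mul, Complex.sq_norm,
        Complex.normSq_add_mul_I]
      ring
    simp only [hterm]
    rw [Finset.sum_add_distrib, ← Finset.mul_sum, ← Finset.mul_sum, hx, hy]
    rw [mul_one, mul_one, Real.cos_sq_add_sin_sq]
  · -- value of V
    have key : ∑ k, f θ x y k ^ 2
        = Complex.exp ((θ:ℂ) * Complex.I) ^ 2 * (Real.cos (2 * t) : ℂ) := by
      simp only [hf]
      exact sum_sq_aux m t θ x y hx hy hxy
    rw [key, norm_mul, norm_pow, Complex.norm_exp_ofReal_mul_I, one_pow, one_mul,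
      Complex.norm_real, Real.norm_eq_abs, sq_abs]
  · -- two-to-one
    constructor
    · intro heq
      have key1 : ∑ k, f θ x y k ^ 2
          = Complex.exp ((θ:ℂ) * Complex.I) ^ 2 * (Real.cos (2 * t) : ℂ) := by
        simp only [hf]; exact sum_sq_aux m t θ x y hx hy hxy
      have key2 : ∑ k, f φ u v k ^ 2
          = Complex.exp ((φ:ℂ) * Complex.I) ^ 2 * (Real.cos (2 * t) : ℂ) := by
        simp only [hf]; exact sum_sq_aux m t φ u v hu hv huv
      have hsum : Complex.exp ((θ:ℂ) * Complex.I) ^ 2 * (Real.cos (2 * t) : ℂ)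
          = Complex.exp ((φ:ℂ) * Complex.I) ^ 2 * (Real.cos (2 * t) : ℂ) := by
        rw [← key1, ← key2, heq]
      have hsq : Complex.exp ((φ:ℂ) * Complex.I) ^ 2
          = Complex.exp ((θ:ℂ) * Complex.I) ^ 2 :=
        (mul_right_cancel₀ (Complex.ofReal_ne_zero.mpr hc2.ne') hsum).symm
      have hk : ∀ k, Complex.exp ((θ:ℂ) * Complex.I)
            * ((Real.cos t * x k : ℝ) + (Real.sin t * y k : ℝ) * Complex.I)
          = Complex.exp ((φ:ℂ) * Complex.I)
            * ((Real.cos t * u k : ℝ) + (Real.sin t * v k : ℝ) * Complex.I) := by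
        intro k
        have := congrFun heq k
        simpa only [hf] using this
      have hcases : (Complex.exp ((φ:ℂ) * Complex.I) - Complex.exp ((θ:ℂ) * Complex.I))
          * (Complex.exp ((φ:ℂ) * Complex.I) + Complex.exp ((θ:ℂ) * Complex.I)) = 0 := by
        linear_combination hsq
      rcases mul_eq_zero.mp hcases with h | h
      · -- e' = e
        have he' : Complex.exp ((φ:ℂ) * Complex.I) = Complex.exp ((θ:ℂ) * Complex.I) :=
          sub_eq_zero.mp h
        have hpt : ∀ k, Real.cos t * u k = Real.cos t * x k
            ∧ Real.sin t * v k = Real.sin t * y k := by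
          intro k
          have h1 : ((Real.cos t * u k : ℝ) : ℂ) + (Real.sin t * v k : ℝ) * Complex.I
              = ((Real.cos t * x k : ℝ) : ℂ) + (Real.sin t * y k : ℝ) * Complex.I := by
            apply mul_left_cancel₀ hE
            rw [hk k, he']
          exact reim_eq' h1
        refine Or.inl ⟨he', ?_, ?_⟩
        · funext k; exact mul_left_cancel₀ hc.ne' (hpt k).1
        · funext k; exact mul_left_cancel₀ hs.ne' (hpt k).2
      · -- e' = -e
        have he' : Complex.exp ((φ:ℂ) * Complex.I) = -Complex.exp ((θ:ℂ) * Complex.I) :=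
          eq_neg_of_add_eq_zero_left h
        have hpt : ∀ k, Real.cos t * u k = -(Real.cos t * x k)
            ∧ Real.sin t * v k = -(Real.sin t * y k) := by
          intro k
          have h1 : ((Real.cos t * u k : ℝ) : ℂ) + (Real.sin t * v k : ℝ) * Complex.I
              = ((-(Real.cos t * x k) : ℝ) : ℂ) + ((-(Real.sin t * y k) : ℝ)) * Complex.I := by
            apply mul_left_cancel₀ hE
            have h2 := hk k
            rw [he'] at h2
            push_cast at h2 ⊢
            linear_combination h2
          exact reim_eq' h1
        refine Or.inr ⟨by rw [hpi]; exact he', ?_, ?_⟩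
        · funext k
          simp only [Pi.neg_apply]
          apply mul_left_cancel₀ hc.ne'
          rw [(hpt k).1]; ring
        · funext k
          simp only [Pi.neg_apply]
          apply mul_left_cancel₀ hs.ne'
          rw [(hpt k).2]; ring
    · rintro (⟨he, hu', hv'⟩ | ⟨he, hu', hv'⟩) <;> subst hu' <;> subst hv' <;>
        funext k <;> simp only [hf]
      · rw [he]
      · rw [he, hpi]
        simp only [Pi.neg_apply]
        push_cast
        ring
end

section
/- Every matrix A in S⁴ = {A ∈ M₃(ℝ) : Aᵀ = A, tr A = 0, |A| = 1} (norm |A|² = tr(AAᵀ)) is conjugate by some U ∈ SO(3) to the diagonal matrix B_t with diagonal entries √(2/3)·(cos(t − π/3), cos(t + π/3), cos(t + π)) for some t ∈ [0, π/3]. -/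
open Matrix Real

private lemma param_exists {a b c : ℝ} (hab : b ≤ a) (hbc : c ≤ b)
    (hsum : a + b + c = 0) (hsq : a ^ 2 + b ^ 2 + c ^ 2 = 1) :
    ∃ t ∈ Set.Icc (0 : ℝ) (π / 3),
      a = Real.sqrt (2 / 3) * Real.cos (t - π / 3) ∧
      b = Real.sqrt (2 / 3) * Real.cos (t + π / 3) ∧
      c = Real.sqrt (2 / 3) * Real.cos (t + π) := by
  have hb2 : b ^ 2 ≤ 1 / 6 := by
    nlinarith [mul_nonneg (sub_nonneg.2 hab) (sub_nonneg.2 hbc)]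
  set x : ℝ := Real.sqrt (3 / 2) * b with hx
  have h32 : x ^ 2 = 3 / 2 * b ^ 2 := by
    rw [hx, mul_pow, Real.sq_sqrt (by norm_num : (0:ℝ) ≤ 3 / 2)]
  have hx2 : x ^ 2 ≤ 1 / 4 := by rw [h32]; linarith
  have hxl : -(1 / 2) ≤ x := by nlinarith
  have hxr : x ≤ 1 / 2 := by nlinarith
  set u := Real.arccos x with hu
  have hu0 : 0 ≤ u := Real.arccos_nonneg x
  have huπ : u ≤ π := Real.arccos_le_pi x
  have hcu : Real.cos u = x := Real.cos_arccos (by linarith) (by linarith)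
  have hsu : Real.sin u = Real.sqrt (1 - x ^ 2) := Real.sin_arccos x
  have hπ3 : π / 3 ≤ u := by
    by_contra h
    push_neg at h
    have := Real.cos_lt_cos_of_nonneg_of_le_pi hu0 (by linarith [Real.pi_pos]) h
    rw [hcu, Real.cos_pi_div_three] at this
    linarith
  have h2π3 : u ≤ 2 * π / 3 := by
    by_contra h
    push_neg at h
    have := Real.cos_lt_cos_of_nonneg_of_le_pi (by linarith [Real.pi_pos]) huπ h
    rw [hcu, show (2 * π / 3 : ℝ) = π - π / 3 by ring, Real.cos_pi_sub,
      Real.cos_pi_div_three] at this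
    linarith
  have hs32 : Real.sqrt (2 / 3) * Real.sqrt (3 / 2) = 1 := by
    rw [← Real.sqrt_mul (by norm_num : (0:ℝ) ≤ 2 / 3)]
    norm_num
  have hbx : Real.sqrt (2 / 3) * x = b := by
    rw [hx, ← mul_assoc, hs32, one_mul]
  set s : ℝ := Real.sqrt (2 - 3 * b ^ 2) with hsdef
  have hkey : Real.sqrt 3 * (Real.sqrt (2 / 3) * Real.sqrt (1 - x ^ 2)) = s := by
    rw [← Real.sqrt_mul (by norm_num : (0:ℝ) ≤ 2 / 3),
      ← Real.sqrt_mul (by norm_num : (0:ℝ) ≤ 3), hsdef]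
    congr 1
    rw [h32]; ring
  have hac : a - c = s := by
    have h1 : (a - c) ^ 2 = 2 - 3 * b ^ 2 := by nlinarith
    rw [hsdef, ← h1, Real.sqrt_sq (by linarith : (0:ℝ) ≤ a - c)]
  have ha : a = (-b + s) / 2 := by
    have : a + c = -b := by linarith
    linarith
  have hc23 : Real.cos (2 * π / 3) = -(1 / 2) := by
    rw [show (2 * π / 3 : ℝ) = π - π / 3 by ring, Real.cos_pi_sub, Real.cos_pi_div_three]
  have hs23 : Real.sin (2 * π / 3) = Real.sqrt 3 / 2 := by
    rw [show (2 * π / 3 : ℝ) = π - π / 3 by ring, Real.sin_pi_sub, Real.sin_pi_div_three]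
  clear_value x u s
  refine ⟨u - π / 3, ⟨by linarith, by linarith⟩, ?_, ?_, ?_⟩
  · rw [show u - π / 3 - π / 3 = u - 2 * π / 3 by ring, Real.cos_sub, hcu, hsu, hc23, hs23]
    linear_combination ha + (1/2)*hbx - (1/2)*hkey
  · rw [show u - π / 3 + π / 3 = u by ring, hcu]
    exact hbx.symm
  · rw [show u - π / 3 + π = (u - π / 3) + π by ring, Real.cos_add_pi, Real.cos_sub, hcu, hsu,
      Real.cos_pi_div_three, Real.sin_pi_div_three]
    linear_combination hsum - ha + (1 / 2) * hbx + (1 / 2) * hkey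


-- A diagonalization lemma: symmetric real 3x3 matrix is orthogonally conjugate
-- (with det 1) to a diagonal matrix with decreasing entries.
private lemma diag_sorted (A : Matrix (Fin 3) (Fin 3) ℝ) (hsymm : Aᵀ = A) :
    ∃ (U : Matrix (Fin 3) (Fin 3) ℝ) (d : Fin 3 → ℝ),
      U * Uᵀ = 1 ∧ U.det = 1 ∧ d 1 ≤ d 0 ∧ d 2 ≤ d 1 ∧
      U * A * Uᵀ = Matrix.diagonal d := by
  have hA : A.IsHermitian := by
    rw [Matrix.IsHermitian, Matrix.conjTranspose_eq_transpose_of_trivial]; exact hsymm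
  set d0 : Fin 3 → ℝ := hA.eigenvalues with hd0
  set W : Matrix (Fin 3) (Fin 3) ℝ := (hA.eigenvectorUnitary : Matrix (Fin 3) (Fin 3) ℝ) with hWdef
  have hWmem := hA.eigenvectorUnitary.2
  have hW1 : W * Wᵀ = 1 := by
    have := (Matrix.mem_unitaryGroup_iff).mp hWmem
    rwa [Matrix.star_eq_conjTranspose, Matrix.conjTranspose_eq_transpose_of_trivial] at this
  have hW2 : Wᵀ * W = 1 := mul_eq_one_comm.mp hW1
  have hspec : Wᵀ * A * W = Matrix.diagonal d0 := by
    have := hA.conjStarAlgAut_star_eigenvectorUnitary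
    rw [Unitary.conjStarAlgAut_star_apply] at this
    rwa [Matrix.star_eq_conjTranspose, Matrix.conjTranspose_eq_transpose_of_trivial,
      RCLike.ofReal_real_eq_id, Function.id_comp] at this
  -- sorting permutation
  set σ : Equiv.Perm (Fin 3) := Tuple.sort d0 with hσ
  have hmono : Monotone (d0 ∘ σ) := Tuple.monotone_sort d0
  set τ : Equiv.Perm (Fin 3) := (Fin.revPerm).trans σ with hτ
  set P : Matrix (Fin 3) (Fin 3) ℝ := τ.toPEquiv.toMatrix with hP
  have hPt : Pᵀ = (τ.symm).toPEquiv.toMatrix := by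
    rw [hP, Equiv.toPEquiv_symm, PEquiv.toMatrix_symm]
  have hconj : ∀ M : Matrix (Fin 3) (Fin 3) ℝ, P * M * Pᵀ = M.submatrix τ τ := by
    intro M
    rw [hP, PEquiv.toMatrix_toPEquiv_mul, hPt, PEquiv.mul_toMatrix_toPEquiv, Equiv.symm_symm,
      Matrix.submatrix_submatrix, Function.comp_id, Function.id_comp]
  have hPP : P * Pᵀ = 1 := by
    have := hconj 1
    rwa [Matrix.mul_one, Matrix.submatrix_one_equiv] at this
  -- candidate U₁
  set U₁ : Matrix (Fin 3) (Fin 3) ℝ := P * Wᵀ with hU₁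
  have hU₁t : U₁ᵀ = W * Pᵀ := by rw [hU₁, Matrix.transpose_mul, Matrix.transpose_transpose]
  have hU₁o : U₁ * U₁ᵀ = 1 := by
    rw [hU₁, hU₁t, show P * Wᵀ * (W * Pᵀ) = P * (Wᵀ * W) * Pᵀ by noncomm_ring, hW2,
      Matrix.mul_one, hPP]
  have hU₁A : U₁ * A * U₁ᵀ = Matrix.diagonal (d0 ∘ τ) := by
    rw [hU₁, hU₁t, show P * Wᵀ * A * (W * Pᵀ) = P * (Wᵀ * A * W) * Pᵀ by noncomm_ring, hspec,
      hconj, Matrix.submatrix_diagonal_equiv]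
  have hd10 : (d0 ∘ τ) 1 ≤ (d0 ∘ τ) 0 := hmono (show Fin.revPerm 1 ≤ Fin.revPerm 0 by decide)
  have hd21 : (d0 ∘ τ) 2 ≤ (d0 ∘ τ) 1 := hmono (show Fin.revPerm 2 ≤ Fin.revPerm 1 by decide)
  have hdet2 : U₁.det = 1 ∨ U₁.det = -1 := by
    have := congrArg Matrix.det hU₁o
    rw [Matrix.det_mul, Matrix.det_transpose, Matrix.det_one] at this
    exact mul_self_eq_one_iff.mp this
  rcases hdet2 with h | h
  · exact ⟨U₁, d0 ∘ τ, hU₁o, h, hd10, hd21, hU₁A⟩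
  · set D : Matrix (Fin 3) (Fin 3) ℝ := Matrix.diagonal ![-1, 1, 1] with hD
    have hDt : Dᵀ = D := Matrix.diagonal_transpose _
    have hDD : D * D = 1 := by
      rw [hD, Matrix.diagonal_mul_diagonal,
        show (fun i => ![-1, 1, 1] i * ![(-1 : ℝ), 1, 1] i) = fun _ => 1 from
          funext fun i => by fin_cases i <;> norm_num,
        Matrix.diagonal_one]
    have hDdet : D.det = -1 := by
      rw [hD, Matrix.det_diagonal, Fin.prod_univ_three]
      norm_num
      rfl
    have hDdiag : ∀ e : Fin 3 → ℝ, D * Matrix.diagonal e * D = Matrix.diagonal e := by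
      intro e
      have hcomm : D * Matrix.diagonal e = Matrix.diagonal e * D := by
        rw [hD, Matrix.diagonal_mul_diagonal, Matrix.diagonal_mul_diagonal]
        ext i j
        simp [Matrix.diagonal_apply, mul_comm]
      rw [hcomm, Matrix.mul_assoc, hDD, Matrix.mul_one]
    refine ⟨D * U₁, d0 ∘ τ, ?_, ?_, hd10, hd21, ?_⟩
    · rw [Matrix.transpose_mul, hDt, show D * U₁ * (U₁ᵀ * D) = D * (U₁ * U₁ᵀ) * D by noncomm_ring,
        hU₁o, Matrix.mul_one, hDD]
    · rw [Matrix.det_mul, hDdet, h]; norm_num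
    · rw [Matrix.transpose_mul, hDt,
        show D * U₁ * A * (U₁ᵀ * D) = D * (U₁ * A * U₁ᵀ) * D by noncomm_ring, hU₁A, hDdiag]

/-- Every trace-free, unit-norm symmetric `3×3` real matrix is conjugate by
some `U ∈ SO(3)` to the diagonal matrix `B_t` with entries
`√(2/3)·(cos(t−π/3), cos(t+π/3), cos(t+π))` for some `t ∈ [0, π/3]`. -/
theorem orbit_representatives_SO3 (A : Matrix (Fin 3) (Fin 3) ℝ)
    (hsymm : Aᵀ = A) (htr : A.trace = 0) (hnorm : (A * Aᵀ).trace = 1) :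
    ∃ U : Matrix (Fin 3) (Fin 3) ℝ, U * Uᵀ = 1 ∧ U.det = 1 ∧
      ∃ t ∈ Set.Icc (0 : ℝ) (π / 3),
        U * A * Uᵀ = Matrix.diagonal
          ![Real.sqrt (2 / 3) * Real.cos (t - π / 3),
            Real.sqrt (2 / 3) * Real.cos (t + π / 3),
            Real.sqrt (2 / 3) * Real.cos (t + π)] := by
  obtain ⟨U, d, hUUt, hUdet, h10, h21, hdiag⟩ := diag_sorted A hsymm
  have hUtU : Uᵀ * U = 1 := mul_eq_one_comm.mp hUUt
  have hA' : A = Uᵀ * Matrix.diagonal d * U := by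
    have h1 : Uᵀ * (U * A * Uᵀ) * U = Uᵀ * Matrix.diagonal d * U := by rw [hdiag]
    rw [show Uᵀ * (U * A * Uᵀ) * U = (Uᵀ * U) * A * (Uᵀ * U) from by noncomm_ring, hUtU,
      Matrix.one_mul, Matrix.mul_one] at h1
    exact h1
  have htrd : d 0 + d 1 + d 2 = 0 := by
    have h := htr
    rw [hA', Matrix.trace_mul_cycle, hUUt, Matrix.one_mul, Matrix.trace_diagonal,
      Fin.sum_univ_three] at h
    exact h
  have hsqd : d 0 ^ 2 + d 1 ^ 2 + d 2 ^ 2 = 1 := by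
    have h2 : A * A = Uᵀ * (Matrix.diagonal d * Matrix.diagonal d) * U := by
      rw [hA', show Uᵀ * Matrix.diagonal d * U * (Uᵀ * Matrix.diagonal d * U) =
          Uᵀ * Matrix.diagonal d * (U * Uᵀ) * (Matrix.diagonal d * U) from by noncomm_ring,
        hUUt, Matrix.mul_one]
      noncomm_ring
    have h3 := hnorm
    rw [hsymm, h2, Matrix.trace_mul_cycle, hUUt, Matrix.one_mul,
      Matrix.diagonal_mul_diagonal, Matrix.trace_diagonal, Fin.sum_univ_three] at h3
    linear_combination h3
  obtain ⟨t, ht, h1, h2, h3⟩ := param_exists h10 h21 htrd hsqd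
  refine ⟨U, hUUt, hUdet, t, ht, ?_⟩
  have hd : d = ![Real.sqrt (2 / 3) * Real.cos (t - π / 3),
      Real.sqrt (2 / 3) * Real.cos (t + π / 3),
      Real.sqrt (2 / 3) * Real.cos (t + π)] := by
    funext i
    fin_cases i
    · simpa using h1
    · simpa using h2
    · simpa using h3
  rw [hdiag, hd]
end
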